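/- arXiv:2405.20433 — 5 statements merged into one kernel-verified Lean document; each statement's English description precedes it below -/
import Mathlib

section
/- Let f : ℝ → ℝ be convex, let S be a global minimizer of f, let Ŝ ≥ S be a point at which P is a subgradient of f (i.e. f(z) ≥ f(Ŝ) + P·(z − Ŝ) for all z ∈ ℝ), let P ≥ 0 and y ≥ 0, and let x ∈ ℝ satisfy S + y ≤ x ≤ Ŝ + y. Then u = y minimizes the one-step objective φ(u) = f(x − u) + P·max(y, u) over u ≥ 0, i.e. f(x − y) + P·y ≤ f(x − u) + P·max(y, u) for every u ≥ 0. -/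
/-! A convex function has nondecreasing secant slopes. Right of a global minimizer `S` all
slopes are nonnegative, so `f` is nondecreasing there; left of a point `Ŝ` with subgradient
`P` all slopes are at most `P`. For `u ≤ y` the cost `P * max y u` is constant and
`x - u ≥ x - y ≥ S`; for `u ≥ y` the extra peak cost `P * (u - y)` outweighs the decrease of
`f` on `[x - u, x - y] ⊆ (-∞, Ŝ]`. -/

namespace ConvexOn

variable {𝕜 : Type*} [Field 𝕜] [LinearOrder 𝕜] [IsStrictOrderedRing 𝕜] {s : Set 𝕜}
  {f : 𝕜 → 𝕜} {a b c P : 𝕜}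

theorem add_mul_sub_le_of_supporting_of_le (hf : ConvexOn 𝕜 s f) (hc : c ∈ s) (hb : b ∈ s)
    (hsupp : ∀ z ∈ s, f c + P * (z - c) ≤ f z) (ha : a ∈ s) (hca : c ≤ a) (hab : a ≤ b) :
    f a + P * (b - a) ≤ f b := by
  rcases hab.eq_or_lt with rfl | hab
  · simp
  rcases hca.eq_or_lt with rfl | hca
  · exact hsupp b hb
  have hP : P ≤ (f a - f c) / (a - c) := by
    rw [le_div_iff₀ (sub_pos.2 hca)]
    linarith [hsupp a ha]
  have := (le_div_iff₀ (sub_pos.2 hab)).1 (hP.trans (hf.slope_mono_adjacent hc hb hca hab))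
  linarith

theorem le_add_mul_sub_of_supporting_of_le (hf : ConvexOn 𝕜 s f) (ha : a ∈ s) (hc : c ∈ s)
    (hsupp : ∀ z ∈ s, f c + P * (z - c) ≤ f z) (hb : b ∈ s) (hab : a ≤ b) (hbc : b ≤ c) :
    f b ≤ f a + P * (b - a) := by
  rcases hab.eq_or_lt with rfl | hab
  · simp
  rcases hbc.eq_or_lt with rfl | hbc
  · linarith [hsupp a ha]
  have hP : (f c - f b) / (c - b) ≤ P := by
    rw [div_le_iff₀ (sub_pos.2 hbc)]
    linarith [hsupp b hb]
  have := (div_le_iff₀ (sub_pos.2 hab)).1 ((hf.slope_mono_adjacent ha hc hab hbc).trans hP)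
  linarith

theorem monotoneOn_Ici_of_isMinOn (hf : ConvexOn 𝕜 s f) (hc : c ∈ s) (hmin : IsMinOn f s c) :
    MonotoneOn f (s ∩ Set.Ici c) := fun a ha b hb hab => by
  simpa using hf.add_mul_sub_le_of_supporting_of_le (P := 0) hc hb.1
    (fun z hz => by simpa using hmin hz) ha.1 ha.2 hab

end ConvexOn

theorem one_step_peak_cap_optimal_general
    (f : ℝ → ℝ) (hf : ConvexOn ℝ Set.univ f)
    (S Shat P y x : ℝ)
    (hS : ∀ z : ℝ, f S ≤ f z)
    (hsub : ∀ z : ℝ, f Shat + P * (z - Shat) ≤ f z)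
    (hx₁ : S + y ≤ x) (hx₂ : x ≤ Shat + y) :
    ∀ u : ℝ, 0 ≤ u → f (x - y) + P * y ≤ f (x - u) + P * max y u := by
  intro u _
  rcases le_total u y with huy | hyu
  · have hmono := hf.monotoneOn_Ici_of_isMinOn (Set.mem_univ S) fun z _ => hS z
    have : f (x - y) ≤ f (x - u) :=
      hmono ⟨trivial, Set.mem_Ici.2 (by linarith)⟩ ⟨trivial, Set.mem_Ici.2 (by linarith)⟩
        (by linarith)
    rw [max_eq_left huy]
    linarith
  · have : f (x - y) ≤ f (x - u) + P * ((x - y) - (x - u)) :=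
      hf.le_add_mul_sub_of_supporting_of_le trivial trivial (fun z _ => hsub z) trivial
        (by linarith) (by linarith)
    rw [max_eq_right hyu]
    linarith

/-- If `f` is convex with global minimizer `S`, `Ŝ ≥ S` is a point where `P`
is a subgradient of `f`, `P ≥ 0`, `y ≥ 0` and `S + y ≤ x ≤ Ŝ + y`, then `u = y` minimizes
the one-step peak-pricing objective `u ↦ f (x - u) + P * max y u` over `u ≥ 0`. -/
theorem one_step_peak_cap_optimal
    (f : ℝ → ℝ) (hf : ConvexOn ℝ Set.univ f)
    (S Shat P y x : ℝ)
    (hS : ∀ z : ℝ, f S ≤ f z)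
    (hSle : S ≤ Shat)
    (hsub : ∀ z : ℝ, f Shat + P * (z - Shat) ≤ f z)
    (hP : 0 ≤ P) (hy : 0 ≤ y)
    (hx₁ : S + y ≤ x) (hx₂ : x ≤ Shat + y) :
    ∀ u : ℝ, 0 ≤ u → f (x - y) + P * y ≤ f (x - u) + P * max y u :=
  one_step_peak_cap_optimal_general f hf S Shat P y x hS hsub hx₁ hx₂
end

section
/- Let f : ℝ → ℝ be convex, let Ŝ be a point at which P is a subgradient of f (i.e. f(z) ≥ f(Ŝ) + P·(z − Ŝ) for all z ∈ ℝ), let P ≥ 0 and y ≥ 0, and let x ∈ ℝ satisfy x ≥ Ŝ + y. Then u = x − Ŝ minimizes the one-step objective φ(u) = f(x − u) + P·max(y, u) over u ≥ 0, i.e. f(Ŝ) + P·(x − Ŝ) ≤ f(x − u) + P·max(y, u) for every u ≥ 0. -/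
/-- If `f` is convex, `Ŝ` is a point where `P` is a subgradient of `f`,
`P ≥ 0`, `y ≥ 0` and `x ≥ Ŝ + y`, then `u = x - Ŝ` minimizes the one-step peak-pricing
objective `u ↦ f (x - u) + P * max y u` over `u ≥ 0`. -/
theorem one_step_peak_upper_threshold_optimal
    (f : ℝ → ℝ) (hf : ConvexOn ℝ Set.univ f)
    (Shat P y x : ℝ)
    (hsub : ∀ z : ℝ, f Shat + P * (z - Shat) ≤ f z)
    (hP : 0 ≤ P) (hy : 0 ≤ y)
    (hx : Shat + y ≤ x) :
    ∀ u : ℝ, 0 ≤ u → f Shat + P * (x - Shat) ≤ f (x - u) + P * max y u := by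
  intro u hu
  have h1 := hsub (x - u)
  have h2 : u ≤ max y u := le_max_right y u
  nlinarith [mul_le_mul_of_nonneg_left h2 hP]
end

section
/- Consider the finite-horizon peak-pricing value recursion with zero setup cost: V_{T+1}(x, y) = P·y and V_t(x, y) = inf_{u ≥ 0} { a_t·u + Σ_i p_{t,i} ( h_t(x − u + q_{t,i}) + V_{t+1}(x − u + q_{t,i}, max(y, u)) ) }, where P ≥ 0, a_t ≥ 0, each h_t is convex and nonnegative, and the weights p_{t,i} ≥ 0 sum to 1. Then for every t ∈ {1,…,T+1}, V_t is real-valued and jointly convex on ℝ × ℝ≥0 (as a function of (x, y)). -/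
/-!
By backward induction, every `V t` is convex on `ℝ × ℝ≥0`, nonnegative there and
nondecreasing in the peak `y`; for `V (T + 1) = P y` this is clear. Given these properties
of `W = V (t + 1)`, the stage cost `(x, y, u) ↦ a u + Σ_i p_i (h (x - u + q_i) +
W (x - u + q_i, max y u))` is jointly convex on `y, u ≥ 0`: `x - u + q_i` is affine,
`max y u` is convex and nonnegative, and `W` is convex and nondecreasing in its second
argument. It is also nonnegative, so the infimum over `u ≥ 0` is finite, and minimizing a
jointly convex function over the convex fibre `u ≥ 0` yields a convex function of `(x, y)`.
Nonnegativity and monotonicity in `y` pass to the infimum directly.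
-/

open Finset in
/-- The one-stage objective of the peak-pricing refrigeration problem with zero setup
cost: ordering cost `a·u` plus the expected penalty-plus-cost-to-go
`Σ_i p_i (h (x − u + q_i) + W (x − u + q_i, max y u))`. -/
noncomputable def peakLinearStageCost {N : ℕ} (a : ℝ) (q p : Fin N → ℝ)
    (h : ℝ → ℝ) (W : ℝ → ℝ → ℝ) (x y u : ℝ) : ℝ :=
  a * u + ∑ i, p i * (h (x - u + q i) + W (x - u + q i) (max y u))

open Set

theorem ConvexOn.sum {ι E : Type*} [AddCommGroup E] [Module ℝ E] {s : Set E}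
    (t : Finset ι) {f : ι → E → ℝ} (hs : Convex ℝ s) (hf : ∀ i ∈ t, ConvexOn ℝ s (f i)) :
    ConvexOn ℝ s fun x => ∑ i ∈ t, f i x := by
  classical
  induction t using Finset.induction_on with
  | empty => simpa using convexOn_const 0 hs
  | insert i t hi ih =>
    simp only [Finset.sum_insert hi]
    exact (hf i (Finset.mem_insert_self i t)).add
      (ih fun j hj => hf j (Finset.mem_insert_of_mem hj))

theorem ConvexOn.sInf_image_right {E F : Type*} [AddCommGroup E] [Module ℝ E]
    [AddCommGroup F] [Module ℝ F] {s : Set E} {t : Set F} {f : E → F → ℝ}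
    (hf : ConvexOn ℝ (s ×ˢ t) fun z => f z.1 z.2) (ht : t.Nonempty)
    (hbdd : ∀ x ∈ s, BddBelow (f x '' t)) :
    ConvexOn ℝ s fun x => sInf (f x '' t) := by
  obtain ⟨u₀, hu₀⟩ := ht
  refine ⟨fun x₁ hx₁ x₂ hx₂ a b ha hb hab =>
    (hf.1 (mk_mem_prod hx₁ hu₀) (mk_mem_prod hx₂ hu₀) ha hb hab).1,
    fun x₁ hx₁ x₂ hx₂ a b ha hb hab => le_of_forall_pos_le_add fun ε hε => ?_⟩
  obtain ⟨_, ⟨u₁, hu₁, rfl⟩, hlt₁⟩ :=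
    exists_lt_of_csInf_lt (Nonempty.image (f x₁) ⟨u₀, hu₀⟩) (lt_add_of_pos_right _ hε)
  obtain ⟨_, ⟨u₂, hu₂, rfl⟩, hlt₂⟩ :=
    exists_lt_of_csInf_lt (Nonempty.image (f x₂) ⟨u₀, hu₀⟩) (lt_add_of_pos_right _ hε)
  have hmem := hf.1 (mk_mem_prod hx₁ hu₁) (mk_mem_prod hx₂ hu₂) ha hb hab
  calc sInf (f (a • x₁ + b • x₂) '' t)
      ≤ f (a • x₁ + b • x₂) (a • u₁ + b • u₂) := csInf_le (hbdd _ hmem.1) ⟨_, hmem.2, rfl⟩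
    _ ≤ a • f x₁ u₁ + b • f x₂ u₂ :=
      hf.2 (mk_mem_prod hx₁ hu₁) (mk_mem_prod hx₂ hu₂) ha hb hab
    _ ≤ a • (sInf (f x₁ '' t) + ε) + b • (sInf (f x₂ '' t) + ε) := by gcongr
    _ = a • sInf (f x₁ '' t) + b • sInf (f x₂ '' t) + ε := by
      simp only [smul_eq_mul]; linear_combination ε * hab

theorem ConvexOn.comp_affineMap_of_monotoneOn {D E : Type*} [AddCommGroup D] [Module ℝ D]
    [AddCommGroup E] [Module ℝ E] {W : E → ℝ → ℝ}
    (hW : ConvexOn ℝ {z : E × ℝ | 0 ≤ z.2} fun z => W z.1 z.2)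
    (hWmono : ∀ x, MonotoneOn (W x) (Ici 0)) (g : D →ᵃ[ℝ] E) {s : Set D} {m : D → ℝ}
    (hm : ConvexOn ℝ s m) (hm₀ : ∀ z ∈ s, 0 ≤ m z) :
    ConvexOn ℝ s fun z => W (g z) (m z) := by
  refine ⟨hm.1, fun z₁ hz₁ z₂ hz₂ a b ha hb hab => ?_⟩
  have hcombo : 0 ≤ a • m z₁ + b • m z₂ := by
    simp only [smul_eq_mul]; have := hm₀ z₁ hz₁; have := hm₀ z₂ hz₂; positivity
  calc W (g (a • z₁ + b • z₂)) (m (a • z₁ + b • z₂))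
      ≤ W (a • g z₁ + b • g z₂) (a • m z₁ + b • m z₂) := by
        rw [Convex.combo_affine_apply hab]
        exact hWmono _ (hm₀ _ (hm.1 hz₁ hz₂ ha hb hab)) hcombo (hm.2 hz₁ hz₂ ha hb hab)
    _ ≤ a • W (g z₁) (m z₁) + b • W (g z₂) (m z₂) :=
      hW.2 (x := (g z₁, m z₁)) (y := (g z₂, m z₂)) (hm₀ z₁ hz₁) (hm₀ z₂ hz₂) ha hb hab

/-- Monotonicity in the peak `y` is what lets convexity pass through `max y u`. -/
structure IsConvexCostToGo (W : ℝ → ℝ → ℝ) : Prop where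
  convexOn : ConvexOn ℝ {z : ℝ × ℝ | 0 ≤ z.2} fun z => W z.1 z.2
  nonneg : ∀ x y, 0 ≤ y → 0 ≤ W x y
  monotoneOn : ∀ x, MonotoneOn (W x) (Ici 0)

theorem isConvexCostToGo_of_eq_mul {P : ℝ} {W : ℝ → ℝ → ℝ} (hP : 0 ≤ P)
    (hW : ∀ x y, 0 ≤ y → W x y = P * y) : IsConvexCostToGo W where
  convexOn := ((P • LinearMap.snd ℝ ℝ ℝ).convexOn (convex_halfSpace_ge
    (LinearMap.snd ℝ ℝ ℝ).isLinear 0)).congr fun z hz => (hW z.1 z.2 hz).symm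
  nonneg x y hy := hW x y hy ▸ mul_nonneg hP hy
  monotoneOn x y₁ hy₁ y₂ hy₂ hle := by
    rw [hW x y₁ hy₁, hW x y₂ hy₂]; exact mul_le_mul_of_nonneg_left hle hP

/-- `((x, y), u) ↦ x - u + q` -/
def nextState (q : ℝ) : (ℝ × ℝ) × ℝ →ᵃ[ℝ] ℝ :=
  (LinearMap.fst ℝ ℝ ℝ ∘ₗ LinearMap.fst ℝ (ℝ × ℝ) ℝ - LinearMap.snd ℝ (ℝ × ℝ) ℝ).toAffineMap
    + AffineMap.const ℝ _ q

section StageCost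

variable {N : ℕ} {a : ℝ} {q p : Fin N → ℝ} {h : ℝ → ℝ} {W : ℝ → ℝ → ℝ}

theorem peakLinearStageCost_nonneg (ha : 0 ≤ a) (hp : ∀ i, 0 ≤ p i) (hh : ∀ x, 0 ≤ h x)
    (hW : ∀ x y, 0 ≤ y → 0 ≤ W x y) {x y u : ℝ} (hy : 0 ≤ y) (hu : 0 ≤ u) :
    0 ≤ peakLinearStageCost a q p h W x y u :=
  add_nonneg (mul_nonneg ha hu) <| Finset.sum_nonneg fun i _ =>
    mul_nonneg (hp i) (add_nonneg (hh _) (hW _ _ (le_max_of_le_left hy)))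

theorem monotoneOn_peakLinearStageCost (hp : ∀ i, 0 ≤ p i)
    (hW : ∀ x, MonotoneOn (W x) (Ici 0)) (x u : ℝ) :
    MonotoneOn (fun y => peakLinearStageCost a q p h W x y u) (Ici 0) := by
  intro y₁ hy₁ y₂ hy₂ hle
  dsimp only [peakLinearStageCost]
  gcongr with i
  · exact hp i
  · exact hW _ (le_max_of_le_left (mem_Ici.1 hy₁)) (le_max_of_le_left (mem_Ici.1 hy₂))
      (max_le_max_right u hle)

theorem convexOn_peakLinearStageCost (ha : 0 ≤ a) (hp : ∀ i, 0 ≤ p i)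
    (hh : ConvexOn ℝ univ h) (hW : IsConvexCostToGo W) :
    ConvexOn ℝ ({z : ℝ × ℝ | 0 ≤ z.2} ×ˢ Ici 0)
      fun z => peakLinearStageCost a q p h W z.1.1 z.1.2 z.2 := by
  set D : Set ((ℝ × ℝ) × ℝ) := {z : ℝ × ℝ | 0 ≤ z.2} ×ˢ Ici 0
  have hD : Convex ℝ D :=
    (convex_halfSpace_ge (LinearMap.snd ℝ ℝ ℝ).isLinear 0).prod (convex_Ici 0)
  have hpeak : ConvexOn ℝ D fun z => max z.1.2 z.2 :=
    ((LinearMap.snd ℝ ℝ ℝ ∘ₗ LinearMap.fst ℝ (ℝ × ℝ) ℝ).convexOn hD).sup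
      ((LinearMap.snd ℝ (ℝ × ℝ) ℝ).convexOn hD)
  have hterm : ∀ i, ConvexOn ℝ D fun z =>
      h (nextState (q i) z) + W (nextState (q i) z) (max z.1.2 z.2) := fun i =>
    ((hh.comp_affineMap (nextState (q i))).subset (fun _ _ => trivial) hD).add
      (hW.convexOn.comp_affineMap_of_monotoneOn hW.monotoneOn (nextState (q i)) hpeak
        fun z hz => le_max_of_le_right hz.2)
  exact (((LinearMap.snd ℝ (ℝ × ℝ) ℝ).convexOn hD).smul ha).add
    (ConvexOn.sum Finset.univ hD fun i _ => (hterm i).smul (hp i))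

theorem bddBelow_peakLinearStageCost_image (ha : 0 ≤ a) (hp : ∀ i, 0 ≤ p i)
    (hh : ∀ x, 0 ≤ h x) (hW : IsConvexCostToGo W) (x : ℝ) {y : ℝ} (hy : 0 ≤ y) :
    BddBelow (peakLinearStageCost a q p h W x y '' Ici 0) :=
  ⟨0, forall_mem_image.2 fun _ hu => peakLinearStageCost_nonneg ha hp hh hW.nonneg hy hu⟩

theorem setOf_exists_nonneg_eq {β : Type*} (f : ℝ → β) :
    {c : β | ∃ u : ℝ, 0 ≤ u ∧ c = f u} = f '' Ici 0 := by
  ext c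
  simp [eq_comm]

theorem IsConvexCostToGo.of_eq_sInf (hW : IsConvexCostToGo W) (ha : 0 ≤ a)
    (hp : ∀ i, 0 ≤ p i) (hhconv : ConvexOn ℝ univ h) (hhpos : ∀ x, 0 ≤ h x)
    {V : ℝ → ℝ → ℝ} (hV : ∀ x y, 0 ≤ y →
      V x y = sInf {c : ℝ | ∃ u : ℝ, 0 ≤ u ∧ c = peakLinearStageCost a q p h W x y u}) :
    IsConvexCostToGo V := by
  simp only [setOf_exists_nonneg_eq] at hV
  have hbdd := bddBelow_peakLinearStageCost_image (q := q) ha hp hhpos hW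
  refine ⟨?_, fun x y hy => ?_, fun x y₁ hy₁ y₂ hy₂ hle => ?_⟩
  · have hconv := (convexOn_peakLinearStageCost ha hp hhconv hW).sInf_image_right
      (f := fun (z : ℝ × ℝ) u => peakLinearStageCost a q p h W z.1 z.2 u) nonempty_Ici
      fun z hz => hbdd z.1 hz
    exact hconv.congr fun z hz => (hV z.1 z.2 hz).symm
  · rw [hV x y hy]
    exact le_csInf (nonempty_Ici.image _) (forall_mem_image.2 fun _ hu =>
      peakLinearStageCost_nonneg ha hp hhpos hW.nonneg hy hu)
  · rw [hV x y₁ hy₁, hV x y₂ hy₂]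
    exact le_csInf (nonempty_Ici.image _) (forall_mem_image.2 fun u hu =>
      (csInf_le (hbdd x hy₁) (mem_image_of_mem _ hu)).trans
        (monotoneOn_peakLinearStageCost hp hW.monotoneOn x u hy₁ hy₂ hle))

end StageCost

theorem peak_value_convex_general
    (T : ℕ) (P : ℝ) (n : ℕ → ℕ)
    (q p : (t : ℕ) → Fin (n t) → ℝ)
    (h : ℕ → ℝ → ℝ) (a : ℕ → ℝ)
    (V : ℕ → ℝ → ℝ → ℝ)
    (hP : 0 ≤ P)
    (hp : ∀ t ∈ Finset.Icc 1 T, ∀ i, 0 ≤ p t i)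
    (hhconv : ∀ t ∈ Finset.Icc 1 T, ConvexOn ℝ Set.univ (h t))
    (hhpos : ∀ t ∈ Finset.Icc 1 T, ∀ x : ℝ, 0 ≤ h t x)
    (ha : ∀ t ∈ Finset.Icc 1 T, 0 ≤ a t)
    (hVterm : ∀ x y : ℝ, 0 ≤ y → V (T + 1) x y = P * y)
    (hVrec : ∀ t ∈ Finset.Icc 1 T, ∀ x y : ℝ, 0 ≤ y →
      V t x y = sInf {c : ℝ | ∃ u : ℝ, 0 ≤ u ∧
        c = peakLinearStageCost (a t) (q t) (p t) (h t) (V (t + 1)) x y u}) :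
    (∀ t ∈ Finset.Icc 1 T, ∀ x y : ℝ, 0 ≤ y →
      ({c : ℝ | ∃ u : ℝ, 0 ≤ u ∧
        c = peakLinearStageCost (a t) (q t) (p t) (h t) (V (t + 1)) x y u}.Nonempty ∧
       BddBelow {c : ℝ | ∃ u : ℝ, 0 ≤ u ∧
        c = peakLinearStageCost (a t) (q t) (p t) (h t) (V (t + 1)) x y u})) ∧
    (∀ t ∈ Finset.Icc 1 (T + 1),
      ConvexOn ℝ {z : ℝ × ℝ | 0 ≤ z.2} (fun z : ℝ × ℝ => V t z.1 z.2)) := by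
  have hcost : ∀ t ∈ Finset.Icc 1 (T + 1), IsConvexCostToGo (V t) := by
    intro t ht
    obtain ⟨ht₁, htT⟩ := Finset.mem_Icc.mp ht
    refine Nat.decreasingInduction' (fun k hk htk hnext => ?_) htT
      (isConvexCostToGo_of_eq_mul hP hVterm)
    have hk' : k ∈ Finset.Icc 1 T := Finset.mem_Icc.mpr ⟨ht₁.trans htk, by omega⟩
    exact hnext.of_eq_sInf (ha k hk') (hp k hk') (hhconv k hk') (hhpos k hk') (hVrec k hk')
  refine ⟨fun t ht x y hy => ?_, fun t ht => (hcost t ht).convexOn⟩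
  have hnext := hcost (t + 1) (by simp_all)
  rw [setOf_exists_nonneg_eq]
  exact ⟨nonempty_Ici.image _,
    bddBelow_peakLinearStageCost_image (ha t ht) (hp t ht) (hhpos t ht) hnext x hy⟩

/-- In the finite-horizon peak-pricing value recursion with zero setup cost,
`P ≥ 0`, `a_t ≥ 0` and convex nonnegative penalties, each value function `V_t` is
real-valued (the infimized set is nonempty and bounded below) and jointly convex on
`ℝ × ℝ≥0`. -/
theorem peak_value_convex
    (T : ℕ) (P : ℝ) (n : ℕ → ℕ)
    (q p : (t : ℕ) → Fin (n t) → ℝ)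
    (h : ℕ → ℝ → ℝ) (a : ℕ → ℝ)
    (V : ℕ → ℝ → ℝ → ℝ)
    (hP : 0 ≤ P)
    (hq : ∀ t ∈ Finset.Icc 1 T, ∀ i, 0 ≤ q t i)
    (hp : ∀ t ∈ Finset.Icc 1 T, ∀ i, 0 ≤ p t i)
    (hpsum : ∀ t ∈ Finset.Icc 1 T, ∑ i, p t i = 1)
    (hhconv : ∀ t ∈ Finset.Icc 1 T, ConvexOn ℝ Set.univ (h t))
    (hhpos : ∀ t ∈ Finset.Icc 1 T, ∀ x : ℝ, 0 ≤ h t x)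
    (ha : ∀ t ∈ Finset.Icc 1 T, 0 ≤ a t)
    (hVterm : ∀ x y : ℝ, 0 ≤ y → V (T + 1) x y = P * y)
    (hVrec : ∀ t ∈ Finset.Icc 1 T, ∀ x y : ℝ, 0 ≤ y →
      V t x y = sInf {c : ℝ | ∃ u : ℝ, 0 ≤ u ∧
        c = peakLinearStageCost (a t) (q t) (p t) (h t) (V (t + 1)) x y u}) :
    (∀ t ∈ Finset.Icc 1 T, ∀ x y : ℝ, 0 ≤ y →
      ({c : ℝ | ∃ u : ℝ, 0 ≤ u ∧
        c = peakLinearStageCost (a t) (q t) (p t) (h t) (V (t + 1)) x y u}.Nonempty ∧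
       BddBelow {c : ℝ | ∃ u : ℝ, 0 ≤ u ∧
        c = peakLinearStageCost (a t) (q t) (p t) (h t) (V (t + 1)) x y u})) ∧
    (∀ t ∈ Finset.Icc 1 (T + 1),
      ConvexOn ℝ {z : ℝ × ℝ | 0 ≤ z.2} (fun z : ℝ × ℝ => V t z.1 z.2)) :=
  peak_value_convex_general T P n q p h a V hP hp hhconv hhpos ha hVterm hVrec
end

section
/- Let f : ℝ × ℝ → ℝ, fix y ≥ 0, suppose f(·, y) is convex, let m ∈ ℝ be a global minimizer of f(·, y), and let x ∈ ℝ satisfy x ≥ m + y. Then for every u with 0 ≤ u ≤ y one has f(x − y, y) ≤ f(x − u, max(y, u)); in particular, any optimal input in the Bellman step is at least y. -/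
/-- If `f(·, y)` is convex, `m` is a global minimizer of `f(·, y)`, and
`x ≥ m + y`, then the input `u = y` dominates every input `u ∈ [0, y]` in the
Bellman-step objective `u ↦ f (x - u, max y u)`. -/
theorem bellman_step_at_least_peak
    (f : ℝ × ℝ → ℝ) (y : ℝ) (hy : 0 ≤ y)
    (hconv : ConvexOn ℝ Set.univ (fun z : ℝ => f (z, y)))
    (m : ℝ) (hm : ∀ z : ℝ, f (m, y) ≤ f (z, y))
    (x : ℝ) (hx : m + y ≤ x) :
    ∀ u : ℝ, 0 ≤ u → u ≤ y → f (x - y, y) ≤ f (x - u, max y u) := by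
  intro u hu huy
  rw [max_eq_left huy]
  have h1 : m ≤ x - y := by linarith
  have h2 : x - y ≤ x - u := by linarith
  have hseg : x - y ∈ segment ℝ m (x - u) := by
    rw [segment_eq_Icc (by linarith)]
    exact ⟨h1, h2⟩
  have := hconv.le_on_segment (Set.mem_univ m) (Set.mem_univ (x - u)) hseg
  exact this.trans (max_le (hm _) le_rfl)
end

section
/- Let P ≥ b ≥ 1 and y ≥ 0. Define W : ℝ × ℝ≥0 → ℝ by W(x, y) = P·y − b·x if x ≤ 0; W(x, y) = P·y + x if 0 ≤ x ≤ y; W(x, y) = (P + 1 − b)·y + b·x if x ≥ y; and define ψ(u) = u + b·|x − u| + W(x − u, max(y, u)) for u ≥ 0. Then the input u* defined by: u* = 0 if x ≤ 0; u* = x if 0 ≤ x ≤ y; u* = y if y ≤ x ≤ 2y, or if 2y ≤ x and (P + 2 − 3b)·y ≤ (P/2 − 3b/2 + 1)·x; and u* = x/2 otherwise, minimizes ψ over u ≥ 0. -/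
/-- Closed-form one-step value function `W` of the toy refrigeration scenario:
`W(x, y) = P·y − b·x` if `x ≤ 0`; `P·y + x` if `0 ≤ x ≤ y`; `(P + 1 − b)·y + b·x` if `x ≥ y`. -/
noncomputable def toyValueT (b P x y : ℝ) : ℝ :=
  if x ≤ 0 then P * y - b * x
  else if x ≤ y then P * y + x
  else (P + 1 - b) * y + b * x

/-- The two-step Bellman objective at time `T − 1`:
`ψ(u) = u + b·|x − u| + W(x − u, max(y, u))`. -/
noncomputable def toyTwoStepCost (b P x y u : ℝ) : ℝ :=
  u + b * |x - u| + toyValueT b P (x - u) (max y u)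

/-- The candidate optimal input for the two-step toy problem:
`u* = 0` if `x ≤ 0`; `u* = x` if `0 ≤ x ≤ y`; `u* = y` if `y ≤ x ≤ 2y`, or if `2y ≤ x`
and `(P + 2 − 3b)·y ≤ (P/2 − 3b/2 + 1)·x`; and `u* = x/2` otherwise. -/
noncomputable def toyTwoStepInput (b P x y : ℝ) : ℝ :=
  if x ≤ 0 then 0
  else if x ≤ y then x
  else if x ≤ 2 * y then y
  else if (P + 2 - 3 * b) * y ≤ (P / 2 - 3 * b / 2 + 1) * x then y
  else x / 2

lemma cost_cases (b P x y u : ℝ) (hy : 0 ≤ y) (hu : 0 ≤ u) :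
    (x ≤ u ∧ toyTwoStepCost b P x y u = u + 2*b*(u-x) + P * max y u) ∨
    (u ≤ x ∧ x - u ≤ max y u ∧
      toyTwoStepCost b P x y u = u + (b+1)*(x-u) + P * max y u) ∨
    (u ≤ x ∧ max y u ≤ x - u ∧
      toyTwoStepCost b P x y u = u + 2*b*(x-u) + (P+1-b) * max y u) := by
  rcases le_total x u with h | h
  · left
    refine ⟨h, ?_⟩
    unfold toyTwoStepCost toyValueT
    rw [abs_of_nonpos (by linarith), if_pos (by linarith)]
    ring
  · rcases le_total (x - u) (max y u) with h2 | h2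
    · right; left
      refine ⟨h, h2, ?_⟩
      rcases le_or_gt (x - u) 0 with h3 | h3
      · have hxu : x = u := by linarith
        subst hxu
        unfold toyTwoStepCost toyValueT
        simp
      · unfold toyTwoStepCost toyValueT
        rw [abs_of_nonneg (by linarith), if_neg (by linarith), if_pos h2]
        ring
    · right; right
      refine ⟨h, h2, ?_⟩
      rcases le_or_gt (x - u) 0 with h3 | h3
      · have hxu : x = u := by linarith
        have hm : max y u = 0 := by
          refine le_antisymm ?_ (le_max_of_le_left hy)
          calc max y u ≤ x - u := h2
          _ = 0 := by rw [hxu]; ring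
        subst hxu
        unfold toyTwoStepCost toyValueT
        rw [hm]
        simp
      · rcases lt_or_ge (max y u) (x - u) with h4 | h4
        · unfold toyTwoStepCost toyValueT
          rw [abs_of_nonneg (by linarith), if_neg (by linarith), if_neg (by linarith)]
          ring
        · have hmx : x - u = max y u := le_antisymm h4 h2
          unfold toyTwoStepCost toyValueT
          rw [abs_of_nonneg (by linarith), if_neg (by linarith), if_pos h4, hmx]
          ring

set_option maxHeartbeats 1000000 in
/-- For `P ≥ b ≥ 1` and `y ≥ 0`, the input `u*` defined piecewise above
minimizes the two-step Bellman objective `ψ(u) = u + b·|x − u| + W(x − u, max(y, u))`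
over `u ≥ 0`. -/
theorem toy_two_step_optimal
    (b P y x : ℝ) (hb : 1 ≤ b) (hbP : b ≤ P) (hy : 0 ≤ y) :
    ∀ u : ℝ, 0 ≤ u →
      toyTwoStepCost b P x y (toyTwoStepInput b P x y) ≤ toyTwoStepCost b P x y u := by
  intro u hu
  have hb0 : (0:ℝ) ≤ b := by linarith
  have hP0 : (0:ℝ) ≤ P := by linarith
  unfold toyTwoStepInput
  split_ifs with hx hxy h2y hC
  · -- Region 1 : x ≤ 0, u* = 0
    have e : toyTwoStepCost b P x y 0 = 0 + b * (-x) + (P * y - b * x) := by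
      unfold toyTwoStepCost toyValueT
      rw [sub_zero, abs_of_nonpos hx, max_eq_left hy, if_pos hx]
    rw [e]
    rcases cost_cases b P x y u hy hu with ⟨h1, hc⟩ | ⟨h1, h2, hc⟩ | ⟨h1, h2, hc⟩ <;>
      rw [hc] <;> rcases le_total u y with hm | hm
    · rw [max_eq_left hm]
      nlinarith [mul_nonneg hb0 hu]
    · rw [max_eq_right hm]
      nlinarith [mul_nonneg hb0 hu, mul_nonneg hP0 (by linarith : (0:ℝ) ≤ u - y)]
    · rw [max_eq_left hm] at h2 ⊢
      nlinarith [mul_nonneg hb0 (by linarith : (0:ℝ) ≤ -x),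
        mul_nonneg hb0 (by linarith : (0:ℝ) ≤ x),
        mul_nonneg hb0 (by linarith : (0:ℝ) ≤ x - u)]
    · rw [max_eq_right hm] at h2 ⊢
      nlinarith [mul_nonneg hb0 (by linarith : (0:ℝ) ≤ -x),
        mul_nonneg hb0 (by linarith : (0:ℝ) ≤ x),
        mul_nonneg hb0 (by linarith : (0:ℝ) ≤ x - u),
        mul_nonneg hP0 (by linarith : (0:ℝ) ≤ u - y)]
    · rw [max_eq_left hm] at h2 ⊢
      nlinarith [mul_nonneg hb0 (by linarith : (0:ℝ) ≤ -x),
        mul_nonneg hb0 (by linarith : (0:ℝ) ≤ x),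
        mul_nonneg hb0 (by linarith : (0:ℝ) ≤ x - u),
        mul_nonneg hP0 (by linarith : (0:ℝ) ≤ y)]
    · rw [max_eq_right hm] at h2 ⊢
      nlinarith [mul_nonneg hb0 (by linarith : (0:ℝ) ≤ -x),
        mul_nonneg hb0 (by linarith : (0:ℝ) ≤ x),
        mul_nonneg hb0 (by linarith : (0:ℝ) ≤ x - u),
        mul_nonneg hP0 (by linarith : (0:ℝ) ≤ u - y)]
  · -- Region 2 : 0 < x ≤ y, u* = x
    replace hx : 0 < x := not_le.mp hx
    have e : toyTwoStepCost b P x y x = x + b * 0 + (P * y - b * 0) := by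
      unfold toyTwoStepCost toyValueT
      rw [sub_self, abs_zero, max_eq_left hxy, if_pos le_rfl]
    rw [e]
    rcases cost_cases b P x y u hy hu with ⟨h1, hc⟩ | ⟨h1, h2, hc⟩ | ⟨h1, h2, hc⟩ <;>
      rw [hc] <;> rcases le_total u y with hm | hm
    · rw [max_eq_left hm]
      nlinarith [mul_nonneg hb0 (by linarith : (0:ℝ) ≤ u - x)]
    · rw [max_eq_right hm]
      nlinarith [mul_nonneg hb0 (by linarith : (0:ℝ) ≤ u - x),
        mul_nonneg hP0 (by linarith : (0:ℝ) ≤ u - y)]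
    · rw [max_eq_left hm]
      nlinarith [mul_nonneg hb0 (by linarith : (0:ℝ) ≤ x - u)]
    · rw [max_eq_right hm]
      nlinarith [mul_nonneg hb0 (by linarith : (0:ℝ) ≤ x - u),
        mul_nonneg (by linarith : (0:ℝ) ≤ P - b) (by linarith : (0:ℝ) ≤ u - y)]
    · rw [max_eq_left hm] at h2 ⊢
      -- u ≤ x, y ≤ x - u, u ≤ y, but x ≤ y so x - u ≤ y forces boundary
      nlinarith [mul_nonneg hb0 (by linarith : (0:ℝ) ≤ x - u),
        mul_nonneg hb0 (by linarith : (0:ℝ) ≤ u),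
        mul_nonneg hP0 (by linarith : (0:ℝ) ≤ y - (x - u)),
        mul_nonneg hb0 (by linarith : (0:ℝ) ≤ y - (x - u))]
    · rw [max_eq_right hm] at h2 ⊢
      nlinarith [mul_nonneg hb0 (by linarith : (0:ℝ) ≤ x - u),
        mul_nonneg hb0 (by linarith : (0:ℝ) ≤ u),
        mul_nonneg (by linarith : (0:ℝ) ≤ P - b) (by linarith : (0:ℝ) ≤ u - y),
        mul_nonneg hP0 (by linarith : (0:ℝ) ≤ u - (x - u))]
  · -- Region 3 : y < x ≤ 2y, u* = y
    replace hxy : y < x := not_le.mp hxy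
    have e : toyTwoStepCost b P x y y = y + b * (x - y) + (P * y + (x - y)) := by
      unfold toyTwoStepCost toyValueT
      rw [abs_of_nonneg (by linarith), max_self,
        if_neg (not_le.mpr (by linarith : (0:ℝ) < x - y)),
        if_pos (by linarith : x - y ≤ y)]
    rw [e]
    rcases cost_cases b P x y u hy hu with ⟨h1, hc⟩ | ⟨h1, h2, hc⟩ | ⟨h1, h2, hc⟩ <;>
      rw [hc] <;> rcases le_total u y with hm | hm
    · rw [max_eq_left hm]
      nlinarith [mul_nonneg hb0 (by linarith : (0:ℝ) ≤ u - x)]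
    · rw [max_eq_right hm]
      nlinarith [mul_nonneg (by linarith : (0:ℝ) ≤ 1 + P + 2*b)
          (by linarith : (0:ℝ) ≤ u - x),
        mul_nonneg (by linarith : (0:ℝ) ≤ P - b) (by linarith : (0:ℝ) ≤ x - y)]
    · rw [max_eq_left hm]
      nlinarith [mul_nonneg hb0 (by linarith : (0:ℝ) ≤ y - u)]
    · rw [max_eq_right hm]
      nlinarith [mul_nonneg (by linarith : (0:ℝ) ≤ P - b) (by linarith : (0:ℝ) ≤ u - y)]
    · rw [max_eq_left hm] at h2 ⊢
      nlinarith [mul_nonneg (by linarith : (0:ℝ) ≤ 2*b - 1)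
          (by linarith : (0:ℝ) ≤ x - 2*u)]
    · rw [max_eq_right hm] at h2 ⊢
      nlinarith [mul_nonneg (by linarith : (0:ℝ) ≤ P - b) (by linarith : (0:ℝ) ≤ u - y),
        mul_nonneg (by linarith : (0:ℝ) ≤ b - 1) (by linarith : (0:ℝ) ≤ x - 2*u)]
  · -- Region 4 : 2y < x, condition C holds, u* = y
    replace hxy : y < x := not_le.mp hxy
    replace h2y : 2 * y < x := not_le.mp h2y
    have e : toyTwoStepCost b P x y y
        = y + b * (x - y) + ((P + 1 - b) * y + b * (x - y)) := by
      unfold toyTwoStepCost toyValueT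
      rw [abs_of_nonneg (by linarith), max_self,
        if_neg (not_le.mpr (by linarith : (0:ℝ) < x - y)),
        if_neg (not_le.mpr (by linarith : y < x - y))]
    rw [e]
    rcases cost_cases b P x y u hy hu with ⟨h1, hc⟩ | ⟨h1, h2, hc⟩ | ⟨h1, h2, hc⟩ <;>
      rw [hc] <;> rcases le_total u y with hm | hm
    · -- u ≥ x > 2y ≥ 2u impossible-ish with u ≤ y
      rw [max_eq_left hm]
      nlinarith [mul_nonneg hb0 (by linarith : (0:ℝ) ≤ u - x)]
    · rw [max_eq_right hm]
      nlinarith [hC, mul_nonneg (by linarith : (0:ℝ) ≤ P - b) (by linarith : (0:ℝ) ≤ x),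
        mul_nonneg (by linarith : (0:ℝ) ≤ 1 + P + 2*b) (by linarith : (0:ℝ) ≤ u - x)]
    · rw [max_eq_left hm] at h2 ⊢
      -- x - u ≤ y with u ≤ y < x/2 : impossible
      linarith
    · rw [max_eq_right hm] at h2 ⊢
      nlinarith [hC, mul_nonneg (by linarith : (0:ℝ) ≤ P - b)
        (by linarith : (0:ℝ) ≤ 2*u - x)]
    · rw [max_eq_left hm] at h2 ⊢
      nlinarith [mul_nonneg (by linarith : (0:ℝ) ≤ 2*b - 1)
        (by linarith : (0:ℝ) ≤ y - u)]
    · rw [max_eq_right hm] at h2 ⊢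
      rcases le_total 0 (P + 2 - 3*b) with hs | hs
      · nlinarith [mul_nonneg hs (by linarith : (0:ℝ) ≤ u - y)]
      · nlinarith [hC, mul_nonneg (by linarith : (0:ℝ) ≤ 3*b - P - 2)
          (by linarith : (0:ℝ) ≤ x - 2*u)]
  · -- Region 5 : 2y < x, condition C fails, u* = x/2
    replace hx : 0 < x := not_le.mp hx
    replace h2y : 2 * y < x := not_le.mp h2y
    replace hC : (P / 2 - 3 * b / 2 + 1) * x < (P + 2 - 3 * b) * y := not_le.mp hC
    have hneg : P + 2 - 3 * b < 0 := by
      by_contra hpos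
      push_neg at hpos
      nlinarith [mul_nonneg hpos (by linarith : (0:ℝ) ≤ x - 2*y)]
    have e : toyTwoStepCost b P x y (x / 2)
        = x / 2 + b * (x / 2) + (P * (x / 2) + x / 2) := by
      unfold toyTwoStepCost toyValueT
      rw [(by ring : x - x / 2 = x / 2), abs_of_nonneg (by linarith),
        max_eq_right (by linarith : y ≤ x / 2),
        if_neg (not_le.mpr (by linarith : (0:ℝ) < x / 2)), if_pos le_rfl]
    rw [e]
    rcases cost_cases b P x y u hy hu with ⟨h1, hc⟩ | ⟨h1, h2, hc⟩ | ⟨h1, h2, hc⟩ <;>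
      rw [hc] <;> rcases le_total u y with hm | hm
    · rw [max_eq_left hm]
      nlinarith [mul_nonneg hb0 (by linarith : (0:ℝ) ≤ u - x)]
    · rw [max_eq_right hm]
      nlinarith [mul_nonneg (by linarith : (0:ℝ) ≤ 1 + P + 2*b)
          (by linarith : (0:ℝ) ≤ u - x),
        mul_nonneg (by linarith : (0:ℝ) ≤ P - b) (by linarith : (0:ℝ) ≤ x)]
    · rw [max_eq_left hm] at h2 ⊢
      linarith
    · rw [max_eq_right hm] at h2 ⊢
      nlinarith [mul_nonneg (by linarith : (0:ℝ) ≤ P - b)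
        (by linarith : (0:ℝ) ≤ 2*u - x)]
    · rw [max_eq_left hm] at h2 ⊢
      nlinarith [hC, mul_nonneg (by linarith : (0:ℝ) ≤ 2*b - 1)
        (by linarith : (0:ℝ) ≤ y - u)]
    · rw [max_eq_right hm] at h2 ⊢
      nlinarith [mul_nonneg (by linarith : (0:ℝ) ≤ 3*b - P - 2)
        (by linarith : (0:ℝ) ≤ x - 2*u)]
end
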